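/- arXiv:1605.06888 — 2 statements merged into one kernel-verified Lean document; each statement's English description precedes it below -/
import Mathlib

section
/- Let α, β, d be real numbers with α > 0, d > 0, β < 0, and 2α² + β² ≥ 4d. Then ((α² - β² + 2d) + √((β² - α² - 2d)² + 4α²β²)) / (2α²) ≤ 2. -/
theorem stmt_0 (α β d : ℝ) (hα : α > 0) (hd : d > 0) (hβ : β < 0)
    (h : 2 * α ^ 2 + β ^ 2 ≥ 4 * d) :
    ((α ^ 2 - β ^ 2 + 2 * d) + Real.sqrt ((β ^ 2 - α ^ 2 - 2 * d) ^ 2 + 4 * α ^ 2 * β ^ 2)) /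
      (2 * α ^ 2) ≤ 2 := by
  have hc : (0:ℝ) ≤ 3 * α ^ 2 + β ^ 2 - 2 * d := by nlinarith
  have hs : Real.sqrt ((β ^ 2 - α ^ 2 - 2 * d) ^ 2 + 4 * α ^ 2 * β ^ 2)
      ≤ 3 * α ^ 2 + β ^ 2 - 2 * d := by
    calc Real.sqrt ((β ^ 2 - α ^ 2 - 2 * d) ^ 2 + 4 * α ^ 2 * β ^ 2)
        ≤ Real.sqrt ((3 * α ^ 2 + β ^ 2 - 2 * d) ^ 2) := by
          apply Real.sqrt_le_sqrt; nlinarith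
      _ = 3 * α ^ 2 + β ^ 2 - 2 * d := Real.sqrt_sq hc
  rw [div_le_iff₀ (by positivity)]
  linarith
end

section
/- Let r, θ, c, d, α, β be real numbers with α > 0, β < 0, θ - rβ > 0, r > 0, and suppose (θ/2)(α² + β²) - (c + r d)β + θ d > 0 and θ² ≥ 2 r c (Bogomolov inequality, with ch₀ = r, ch₁ = θ, ch₂ = c). Then α² r² + ((β² - α² - 2d)/(-β))·(θ - rβ)·r - (θ - rβ)² < 0. -/
theorem stmt_2 (r θ c d α β : ℝ) (hα : α > 0) (hβ : β < 0) (h1 : θ - r * β > 0) (hr : r > 0)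
    (h2 : (θ / 2) * (α ^ 2 + β ^ 2) - (c + r * d) * β + θ * d > 0)
    (h3 : θ ^ 2 ≥ 2 * r * c) :
    α ^ 2 * r ^ 2 + ((β ^ 2 - α ^ 2 - 2 * d) / (-β)) * (θ - r * β) * r - (θ - r * β) ^ 2 < 0 := by
  have hb : (0:ℝ) < -β := by linarith
  have key : -β * (α ^ 2 * r ^ 2) + (β ^ 2 - α ^ 2 - 2 * d) * (θ - r * β) * r
      + β * (θ - r * β) ^ 2 < 0 := by
    nlinarith [mul_pos hr h2, mul_nonneg hb.le (sub_nonneg.2 h3)]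
  have heq : α ^ 2 * r ^ 2 + ((β ^ 2 - α ^ 2 - 2 * d) / (-β)) * (θ - r * β) * r
      - (θ - r * β) ^ 2
      = (-β * (α ^ 2 * r ^ 2) + (β ^ 2 - α ^ 2 - 2 * d) * (θ - r * β) * r
        + β * (θ - r * β) ^ 2) / (-β) := by
    have hβ0 : β ≠ 0 := ne_of_lt hβ
    field_simp
    ring
  rw [heq]
  exact div_neg_of_neg_of_pos key hb
end
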